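/- Let (C, d) be a chain complex of Λ-vector spaces which in each degree is a finite-dimensional valued Λ-vector space, complete with respect to the valuation ν, with d nondecreasing on ν. Suppose (x_n) is a sequence of cycles in a fixed degree k, all representing the same homology class x ∈ H_k(C), with ν(x_n) → +∞. Then x = 0. Equivalently, every nonzero homology class A admits a finite spectral number ρ(A) = sup{ν(x) : x a cycle representing A} < +∞. -/

import Mathlib

/-!
STATEMENT 8: (Usher's finiteness of spectral invariants.)  Let
`C' --d1--> C --d2--> C''` be (part of) a chain complex of finite-dimensional
valued vector spaces over the universal Novikov field `Λ`, with `C'` complete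
and `d1` nondecreasing for the valuations.  If `(x_n)` is a sequence of cycles
all representing the same homology class as the cycle `x` with `ν(x_n) → +∞`,
then the class is zero, i.e. `x` is a boundary.  Equivalently, a nonzero
homology class `A` has a finite spectral number
`ρ(A) = sup {ν(x') : x'` a cycle representing `A} < +∞`.

`Λ` is modeled as `HahnSeries ℝ ℂ` with valuation `v = orderTop`.
-/

noncomputable abbrev Novikov : Type := HahnSeries ℝ ℂ

noncomputable def nv (x : Novikov) : WithTop ℝ := x.orderTop

lemma nv_zero : nv 0 = ⊤ := HahnSeries.orderTop_zero

lemma nv_eq_top {x : Novikov} : nv x = ⊤ ↔ x = 0 := HahnSeries.orderTop_eq_top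

lemma nv_one : nv 1 = 0 := HahnSeries.orderTop_one

lemma nv_neg (x : Novikov) : nv (-x) = nv x := HahnSeries.orderTop_neg

lemma nv_neg_one : nv (-1) = 0 := by rw [nv_neg, nv_one]

lemma nv_add (x y : Novikov) : min (nv x) (nv y) ≤ nv (x + y) :=
  HahnSeries.min_orderTop_le_orderTop_add

lemma nv_mul (x y : Novikov) : nv (x * y) = nv x + nv y := by
  rcases eq_or_ne x 0 with rfl | hx
  · simp [nv_zero]
  rcases eq_or_ne y 0 with rfl | hy
  · simp [nv_zero]
  have hxy : x * y ≠ 0 := mul_ne_zero hx hy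
  unfold nv
  rw [← HahnSeries.order_eq_orderTop_of_ne_zero hx, ← HahnSeries.order_eq_orderTop_of_ne_zero hy,
    ← HahnSeries.order_eq_orderTop_of_ne_zero hxy, HahnSeries.order_mul hx hy, WithTop.coe_add]

lemma nv_inv_add (x : Novikov) (hx : x ≠ 0) : nv x⁻¹ + nv x = 0 := by
  rw [← nv_mul, inv_mul_cancel₀ hx, nv_one]

lemma top_of_forall_le {b : WithTop ℝ} (h : ∀ M : ℝ, (M : WithTop ℝ) ≤ b) : b = ⊤ := by
  cases b with
  | top => rfl
  | coe t => exact absurd (h (t + 1)) (by exact_mod_cast by linarith)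

lemma nv_ge_iff {x : Novikov} {M : ℝ} :
    (M : WithTop ℝ) ≤ nv x ↔ ∀ g : ℝ, g < M → x.coeff g = 0 := by
  constructor
  · intro h g hg
    exact HahnSeries.coeff_eq_zero_of_lt_orderTop (lt_of_lt_of_le (by exact_mod_cast hg) h)
  · intro h
    by_contra hlt
    push_neg at hlt
    have hx : x ≠ 0 := by
      intro h0; rw [h0] at hlt; simp [HahnSeries.orderTop_zero, nv] at hlt
    have := HahnSeries.order_eq_orderTop_of_ne_zero hx
    rw [nv, ← this] at hlt
    have hord : x.order < M := by exact_mod_cast hlt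
    exact hx (HahnSeries.coeff_order_eq_zero.mp (h _ hord))

lemma novikov_complete (a : ℕ → Novikov)
    (h : ∀ M : ℝ, ∃ N : ℕ, ∀ m n : ℕ, N ≤ m → N ≤ n → (M : WithTop ℝ) ≤ nv (a m - a n)) :
    ∃ L : Novikov, ∀ M : ℝ, ∃ N : ℕ, ∀ n : ℕ, N ≤ n → (M : WithTop ℝ) ≤ nv (a n - L) := by
  choose N hN using h
  -- the limit coefficient function
  set f : ℝ → ℂ := fun g => (a (N (g + 1))).coeff g with hf
  -- key stabilization: for n ≥ N (g+1), the coefficient at g equals f g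
  have key : ∀ g : ℝ, ∀ n : ℕ, N (g + 1) ≤ n → (a n).coeff g = f g := by
    intro g n hn
    have := hN (g + 1) n (N (g + 1)) hn le_rfl
    have hc := (nv_ge_iff.mp this) g (by linarith)
    rw [HahnSeries.coeff_sub] at hc
    simpa [hf] using sub_eq_zero.mp hc
  have hwf : (Function.support f).IsPWO := by
    rw [Set.isPWO_iff_isWF]
    rw [Set.isWF_iff_no_descending_seq]
    intro u hu hmem
    -- all u n ≤ u 0, and on (-∞, u 0] support f agrees with support of a (N (u 0 + 1))
    have hsub : ∀ g : ℝ, g ≤ u 0 → f g ≠ 0 → g ∈ (a (N (u 0 + 1))).support := by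
      intro g hg hfg
      have h1 : (a (max (N (g + 1)) (N (u 0 + 1)))).coeff g = f g :=
        key g _ (le_max_left _ _)
      have h2 := hN (u 0 + 1) (max (N (g + 1)) (N (u 0 + 1))) (N (u 0 + 1))
        (le_max_right _ _) le_rfl
      have hc := (nv_ge_iff.mp h2) g (by linarith)
      rw [HahnSeries.coeff_sub, sub_eq_zero] at hc
      have : (a (N (u 0 + 1))).coeff g = f g := by rw [← hc, h1]
      simpa [HahnSeries.mem_support, this]
    have hWF := (a (N (u 0 + 1))).isPWO_support.isWF
    rw [Set.isWF_iff_no_descending_seq] at hWF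
    refine hWF u hu ?_
    intro n
    refine hsub (u n) ?_ (hmem n)
    rcases Nat.eq_zero_or_pos n with rfl | hn
    · exact le_rfl
    · exact hu.antitone (Nat.zero_le n)
  set L : Novikov := ⟨f, hwf⟩ with hL
  refine ⟨L, fun M => ⟨N M, fun n hn => ?_⟩⟩
  rw [nv_ge_iff]
  intro g hg
  rw [HahnSeries.coeff_sub, sub_eq_zero]
  have h1 : (a (max (N (g + 1)) (N M))).coeff g = f g := key g _ (le_max_left _ _)
  have h2 := hN M n (max (N (g + 1)) (N M)) hn (le_max_right _ _)
  have hc := (nv_ge_iff.mp h2) g hg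
  rw [HahnSeries.coeff_sub, sub_eq_zero] at hc
  rw [hc, h1]

section VModule

variable {C : Type} [AddCommGroup C] [Module Novikov C]

omit [Module Novikov C] in
lemma vzero (ν : C → WithTop ℝ) (hν0 : ∀ x, ν x = ⊤ ↔ x = 0) : ν 0 = ⊤ := (hν0 0).mpr rfl

lemma vneg (ν : C → WithTop ℝ) (hνs : ∀ (a : Novikov) (x : C), ν (a • x) = nv a + ν x)
    (x : C) : ν (-x) = ν x := by
  have := hνs (-1) x
  rw [neg_one_smul] at this
  rw [this, nv_neg_one, zero_add]

lemma vsub_ge (ν : C → WithTop ℝ) (hνs : ∀ (a : Novikov) (x : C), ν (a • x) = nv a + ν x)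
    (hνa : ∀ x y : C, min (ν x) (ν y) ≤ ν (x + y)) (x y : C) :
    min (ν x) (ν y) ≤ ν (x - y) := by
  have := hνa x (-y)
  rw [vneg ν hνs y] at this
  rwa [sub_eq_add_neg]

lemma vsub_comm (ν : C → WithTop ℝ) (hνs : ∀ (a : Novikov) (x : C), ν (a • x) = nv a + ν x)
    (x y : C) : ν (x - y) = ν (y - x) := by
  rw [← vneg ν hνs (x - y), neg_sub]

lemma le_add_vsum {ι : Type} (ν : C → WithTop ℝ) (hν0 : ∀ x, ν x = ⊤ ↔ x = 0)
    (hνa : ∀ x y : C, min (ν x) (ν y) ≤ ν (x + y))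
    (s : Finset ι) (f : ι → C) (b c : WithTop ℝ)
    (h : ∀ j ∈ s, b ≤ c + ν (f j)) : b ≤ c + ν (∑ j ∈ s, f j) := by
  induction s using Finset.cons_induction with
  | empty => simp [vzero ν hν0]
  | cons a s ha ih =>
    rw [Finset.sum_cons]
    have h1 : b ≤ c + ν (f a) := h a (Finset.mem_cons_self a s)
    have h2 : b ≤ c + ν (∑ j ∈ s, f j) := ih fun j hj => h j (Finset.mem_cons_of_mem hj)
    have hm := hνa (f a) (∑ j ∈ s, f j)
    rcases min_cases (ν (f a)) (ν (∑ j ∈ s, f j)) with ⟨he, _⟩ | ⟨he, _⟩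
    · exact h1.trans (add_le_add_right (he ▸ hm) c)
    · exact h2.trans (add_le_add_right (he ▸ hm) c)

lemma vsum_ge {ι : Type} (ν : C → WithTop ℝ) (hν0 : ∀ x, ν x = ⊤ ↔ x = 0)
    (hνa : ∀ x y : C, min (ν x) (ν y) ≤ ν (x + y))
    (s : Finset ι) (f : ι → C) (b : WithTop ℝ)
    (h : ∀ j ∈ s, b ≤ ν (f j)) : b ≤ ν (∑ j ∈ s, f j) := by
  have := le_add_vsum ν hν0 hνa s f b 0 (fun j hj => by rw [zero_add]; exact h j hj)
  rwa [zero_add] at this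

lemma exists_real_lb {ι : Type} [Fintype ι] (v : ι → WithTop ℝ) :
    ∃ m : ℝ, ∀ j, (m : WithTop ℝ) ≤ v j := by
  cases h : Finset.univ.inf v with
  | top =>
    refine ⟨0, fun j => ?_⟩
    have := Finset.inf_le (Finset.mem_univ j) (f := v)
    rw [h] at this
    rw [top_le_iff.mp this]
    exact le_top
  | coe t =>
    refine ⟨t, fun j => ?_⟩
    have := Finset.inf_le (Finset.mem_univ j) (f := v)
    rwa [h] at this

lemma coord_bound (ν : C → WithTop ℝ)
    (hν0 : ∀ x, ν x = ⊤ ↔ x = 0)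
    (hνs : ∀ (a : Novikov) (x : C), ν (a • x) = nv a + ν x)
    (hνa : ∀ x y : C, min (ν x) (ν y) ≤ ν (x + y)) :
    ∀ (r : ℕ) (z : Fin r → C), LinearIndependent Novikov z →
    ∃ K : ℝ, ∀ (a : Fin r → Novikov) (i : Fin r),
      ν (∑ j, a j • z j) ≤ (K : WithTop ℝ) + nv (a i) := by
  intro r
  induction r with
  | zero => exact fun z _ => ⟨0, fun a i => i.elim0⟩
  | succ r IH =>
    intro z hz
    by_contra hK
    push_neg at hK
    -- strengthen to argmin
    have hK' : ∀ K : ℝ, ∃ a : Fin (r+1) → Novikov, ∃ i, a i ≠ 0 ∧ (∀ j, nv (a i) ≤ nv (a j)) ∧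
        (K : WithTop ℝ) + nv (a i) < ν (∑ j, a j • z j) := by
      intro K
      obtain ⟨a, i0, hi0⟩ := hK K
      obtain ⟨i, -, hi⟩ := Finset.exists_min_image Finset.univ (fun j => nv (a j))
        ⟨i0, Finset.mem_univ i0⟩
      have hmin : ∀ j, nv (a i) ≤ nv (a j) := fun j => hi j (Finset.mem_univ j)
      have hlt : (K : WithTop ℝ) + nv (a i) < ν (∑ j, a j • z j) :=
        lt_of_le_of_lt (add_le_add_right (hmin i0) _) hi0
      refine ⟨a, i, ?_, hmin, hlt⟩
      intro h0
      rw [h0, nv_zero, add_top] at hlt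
      exact not_top_lt hlt
    -- pigeonhole: a single index works for all K
    have hP : ∃ i : Fin (r+1), ∀ K : ℝ, ∃ a : Fin (r+1) → Novikov, a i ≠ 0 ∧
        (∀ j, nv (a i) ≤ nv (a j)) ∧ (K : WithTop ℝ) + nv (a i) < ν (∑ j, a j • z j) := by
      by_contra hc
      push_neg at hc
      choose Kf hKf using hc
      set Kstar : ℝ := Finset.univ.sup' Finset.univ_nonempty Kf with hKstar
      obtain ⟨a, i, h1, h2, h3⟩ := hK' Kstar
      have hle : ((Kf i : ℝ) : WithTop ℝ) + nv (a i) < ν (∑ j, a j • z j) := by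
        refine lt_of_le_of_lt ?_ h3
        have : Kf i ≤ Kstar := Finset.le_sup' Kf (Finset.mem_univ i)
        exact add_le_add_left (by exact_mod_cast this) _
      exact absurd hle (not_lt.mpr (hKf i a h1 h2))
    obtain ⟨i, hPi⟩ := hP
    choose A hA0 hAmin hAlt using fun n : ℕ => hPi (n : ℝ)
    -- normalize
    set b : ℕ → Fin (r+1) → Novikov := fun n j => (A n i)⁻¹ * A n j with hb
    have hbi : ∀ n, b n i = 1 := fun n => inv_mul_cancel₀ (hA0 n)
    have hinv_ne : ∀ n, (A n i)⁻¹ ≠ 0 := fun n => inv_ne_zero (hA0 n)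
    have hinv_top : ∀ n, nv (A n i)⁻¹ ≠ ⊤ := fun n => fun h => hinv_ne n (nv_eq_top.mp h)
    set S : ℕ → C := fun n => ∑ j, b n j • z j with hS
    have hSval : ∀ n : ℕ, (n : WithTop ℝ) < ν (S n) := by
      intro n
      have hrw : S n = (A n i)⁻¹ • ∑ j, A n j • z j := by
        rw [Finset.smul_sum]
        exact Finset.sum_congr rfl fun j _ => by rw [hb]; rw [mul_smul]
      have : ν (S n) = nv (A n i)⁻¹ + ν (∑ j, A n j • z j) := by rw [hrw, hνs]
      rw [this]
      have h1 : nv (A n i)⁻¹ + ((n : WithTop ℝ) + nv (A n i)) <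
          nv (A n i)⁻¹ + ν (∑ j, A n j • z j) :=
        WithTop.add_lt_add_left (hinv_top n) (hAlt n)
      calc (n : WithTop ℝ) = (nv (A n i)⁻¹ + nv (A n i)) + (n : WithTop ℝ) := by
            rw [nv_inv_add _ (hA0 n), zero_add]
        _ = nv (A n i)⁻¹ + ((n : WithTop ℝ) + nv (A n i)) := by
            rw [add_assoc, add_comm (nv (A n i)) _]
        _ < _ := h1
    -- split off index i
    set z' : Fin r → C := fun k => z (i.succAbove k) with hz'
    have hz'li : LinearIndependent Novikov z' := hz.comp _ (Fin.succAbove_right_injective)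
    set c : ℕ → Fin r → Novikov := fun n k => b n (i.succAbove k) with hc
    set w : ℕ → C := fun n => ∑ k, c n k • z' k with hw
    have hsplit : ∀ n, S n = z i + w n := by
      intro n
      show (∑ j, b n j • z j) = z i + w n
      rw [Fin.sum_univ_succAbove (fun j => b n j • z j) i, hbi n, one_smul]
    obtain ⟨K', hK'bound⟩ := IH z' hz'li
    -- coordinates form Cauchy sequences
    have hwdiff : ∀ m n : ℕ, ∀ k : Fin r,
        ν (w m - w n) ≤ (K' : WithTop ℝ) + nv (c m k - c n k) := by
      intro m n k
      have : w m - w n = ∑ k, (c m k - c n k) • z' k := by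
        rw [hw, ← Finset.sum_sub_distrib]
        exact Finset.sum_congr rfl fun k _ => (sub_smul _ _ _).symm
      rw [this]
      exact hK'bound (fun k => c m k - c n k) k
    have hwS : ∀ m n : ℕ, w m - w n = S m - S n := by
      intro m n; rw [hsplit m, hsplit n]; abel
    have hcauchy : ∀ k : Fin r, ∀ M : ℝ, ∃ N : ℕ, ∀ m n : ℕ, N ≤ m → N ≤ n →
        (M : WithTop ℝ) ≤ nv (c m k - c n k) := by
      intro k M
      obtain ⟨N, hN⟩ := exists_nat_ge (M + K')
      refine ⟨N, fun m n hm hn => ?_⟩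
      have h1 : ((M + K' : ℝ) : WithTop ℝ) ≤ ν (w m - w n) := by
        rw [hwS]
        refine le_trans ?_ (vsub_ge ν hνs hνa (S m) (S n))
        refine le_min (le_trans ?_ (hSval m).le) (le_trans ?_ (hSval n).le)
        · exact_mod_cast hN.trans (Nat.cast_le.mpr hm)
        · exact_mod_cast hN.trans (Nat.cast_le.mpr hn)
      have h2 := h1.trans (hwdiff m n k)
      have h3 : (K' : WithTop ℝ) + (M : WithTop ℝ) ≤ (K' : WithTop ℝ) + nv (c m k - c n k) := by
        calc (K' : WithTop ℝ) + (M : WithTop ℝ) = ((M + K' : ℝ) : WithTop ℝ) := by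
              rw [← WithTop.coe_add, add_comm K' M]
          _ ≤ _ := h2
      exact (WithTop.add_le_add_iff_left (WithTop.coe_ne_top)).mp h3
    choose Lc hLc using fun k : Fin r => novikov_complete (fun n => c n k) (hcauchy k)
    -- the limit combination
    set u : C := z i + ∑ k, Lc k • z' k with hu
    obtain ⟨m0, hm0⟩ := exists_real_lb (fun k : Fin r => ν (z' k))
    have hutop : ν u = ⊤ := by
      refine top_of_forall_le fun M => ?_
      choose NL hNL using fun k : Fin r => hLc k (M - m0)
      obtain ⟨n, hn1, hn2⟩ : ∃ n : ℕ, M ≤ (n : ℝ) ∧ ∀ k : Fin r, NL k ≤ n := by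
        obtain ⟨n0, hn0⟩ := exists_nat_ge M
        refine ⟨max n0 (Finset.univ.sup NL), hn0.trans (by exact_mod_cast le_max_left _ _),
          fun k => le_trans (Finset.le_sup (Finset.mem_univ k)) (le_max_right _ _)⟩
      have hrest : (M : WithTop ℝ) ≤ ν (∑ k, (Lc k - c n k) • z' k) := by
        refine vsum_ge ν hν0 hνa _ _ _ fun k _ => ?_
        rw [hνs]
        have h1 : ((M - m0 : ℝ) : WithTop ℝ) ≤ nv (Lc k - c n k) := by
          have := hNL k n (hn2 k)
          rwa [← nv_neg, neg_sub] at this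
        calc (M : WithTop ℝ) = ((M - m0 : ℝ) : WithTop ℝ) + (m0 : WithTop ℝ) := by
              rw [← WithTop.coe_add, sub_add_cancel]
          _ ≤ nv (Lc k - c n k) + ν (z' k) := add_le_add h1 (hm0 k)
      have hSn : (M : WithTop ℝ) ≤ ν (S n) := le_trans (by exact_mod_cast hn1) (hSval n).le
      have hsumu : w n + ∑ k, (Lc k - c n k) • z' k = ∑ k, Lc k • z' k := by
        show (∑ k, c n k • z' k) + _ = _
        rw [← Finset.sum_add_distrib]
        refine Finset.sum_congr rfl fun k _ => ?_
        rw [← add_smul]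
        congr 1
        ring
      have hdecomp : u = S n + ∑ k, (Lc k - c n k) • z' k := by
        rw [hu, hsplit n, add_assoc, hsumu]
      rw [hdecomp]
      exact le_trans (le_min hSn hrest) (hνa _ _)
    -- contradiction with linear independence
    have hu0 : u = 0 := (hν0 u).mp hutop
    set d : Fin (r+1) → Novikov := i.insertNth 1 Lc with hd
    have hdsum : ∑ j, d j • z j = u := by
      rw [Fin.sum_univ_succAbove (fun j => d j • z j) i, hd]
      simp only [Fin.insertNth_apply_same, Fin.insertNth_apply_succAbove, one_smul]
      rfl
    have := Fintype.linearIndependent_iff.mp hz d (by rw [hdsum, hu0]) i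
    rw [hd, Fin.insertNth_apply_same] at this
    exact one_ne_zero this

end VModule

lemma span_data (K M M' : Type) [Field K] [AddCommGroup M] [AddCommGroup M']
    [Module K M] [Module K M'] [FiniteDimensional K M] (d1 : M' →ₗ[K] M) :
    ∃ (r : ℕ) (zz : Fin r → M) (yb : Fin r → M'),
      (∀ g : Fin r → K, ∑ j, g j • zz j = 0 → ∀ j, g j = 0) ∧
      (∀ j, d1 (yb j) = zz j) ∧
      (∀ x' : M, (∃ y, d1 y = x') → ∃ av : Fin r → K, x' = ∑ j, av j • zz j) := by
  set V := LinearMap.range d1 with hV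
  set B : Module.Basis (Fin (Module.finrank K V)) K V := Module.finBasis K V with hB
  have hy : ∀ j, ∃ y : M', d1 y = (B j : M) := fun j => (B j).2
  choose yb hyb using hy
  refine ⟨Module.finrank K V, fun j => (B j : M), yb, ?_, hyb, ?_⟩
  · have hzli : LinearIndependent K (fun j => ((B j : M))) :=
      B.linearIndependent.map' V.subtype V.ker_subtype
    exact fun g hg => Fintype.linearIndependent_iff.mp hzli g hg
  · intro x' hx'
    have hx'V : x' ∈ V := hx'
    refine ⟨fun j => B.repr ⟨x', hx'V⟩ j, ?_⟩
    calc x' = ((⟨x', hx'V⟩ : V) : M) := rfl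
      _ = ((∑ j, B.repr ⟨x', hx'V⟩ j • B j : V) : M) := by rw [B.sum_repr ⟨x', hx'V⟩]
      _ = ∑ j, B.repr ⟨x', hx'V⟩ j • (B j : M) := by push_cast; rfl

section Preimage

variable {C : Type} [AddCommGroup C] [Module Novikov C]

lemma preimage_bound {C' : Type} [AddCommGroup C'] [Module Novikov C']
    [FiniteDimensional Novikov C]
    (ν' : C' → WithTop ℝ)
    (hν'0 : ∀ x, ν' x = ⊤ ↔ x = 0)
    (hν's : ∀ (a : Novikov) (x : C'), ν' (a • x) = nv a + ν' x)
    (hν'a : ∀ x y : C', min (ν' x) (ν' y) ≤ ν' (x + y))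
    (ν : C → WithTop ℝ)
    (hν0 : ∀ x, ν x = ⊤ ↔ x = 0)
    (hνs : ∀ (a : Novikov) (x : C), ν (a • x) = nv a + ν x)
    (hνa : ∀ x y : C, min (ν x) (ν y) ≤ ν (x + y))
    (d1 : C' →ₗ[Novikov] C) :
    ∃ K : ℝ, ∀ x' : C, (∃ y : C', d1 y = x') →
      ∃ y : C', d1 y = x' ∧ ν x' ≤ (K : WithTop ℝ) + ν' y := by
  obtain ⟨r, zz, yb, hind, hyb, hspan⟩ := span_data Novikov C C' d1
  have hzli : LinearIndependent Novikov zz := Fintype.linearIndependent_iff.mpr hind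
  obtain ⟨K, hKb⟩ := coord_bound ν hν0 hνs hνa r zz hzli
  obtain ⟨m0, hm0⟩ := exists_real_lb (fun j => ν' (yb j))
  refine ⟨K - m0, fun x' hx' => ?_⟩
  obtain ⟨av, hx'sum⟩ := hspan x' hx'
  refine ⟨∑ j, av j • yb j, ?_, ?_⟩
  · rw [map_sum, hx'sum]
    exact Finset.sum_congr rfl fun j _ => by rw [map_smul, hyb]
  refine le_add_vsum ν' hν'0 hν'a Finset.univ (fun j => av j • yb j) _ _ fun j _ => ?_
  rw [hν's]
  calc ν x' ≤ (K : WithTop ℝ) + nv (av j) := by rw [hx'sum]; exact hKb av j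
    _ = ((K - m0 : ℝ) : WithTop ℝ) + ((m0 : ℝ) : WithTop ℝ) + nv (av j) := by
        rw [← WithTop.coe_add, sub_add_cancel]
    _ = ((K - m0 : ℝ) : WithTop ℝ) + ((m0 : WithTop ℝ) + nv (av j)) := by rw [add_assoc]
    _ ≤ ((K - m0 : ℝ) : WithTop ℝ) + (nv (av j) + ν' (yb j)) := by
        refine add_le_add_right ?_ _
        rw [add_comm (m0 : WithTop ℝ) _]
        exact add_le_add le_rfl (hm0 j)

end Preimage

theorem spectral_number_finite
    (C' C C'' : Type)
    [AddCommGroup C'] [Module Novikov C'] [AddCommGroup C] [Module Novikov C]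
    [AddCommGroup C''] [Module Novikov C'']
    [FiniteDimensional Novikov C'] [FiniteDimensional Novikov C]
    (ν' : C' → WithTop ℝ) (ν : C → WithTop ℝ)
    (hν'0 : ∀ x, ν' x = ⊤ ↔ x = 0)
    (hν's : ∀ (a : Novikov) (x : C'), ν' (a • x) = nv a + ν' x)
    (hν'a : ∀ x y : C', min (ν' x) (ν' y) ≤ ν' (x + y))
    (hν0 : ∀ x, ν x = ⊤ ↔ x = 0)
    (hνs : ∀ (a : Novikov) (x : C), ν (a • x) = nv a + ν x)
    (hνa : ∀ x y : C, min (ν x) (ν y) ≤ ν (x + y))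
    -- completeness of `C'` with respect to the valuation `ν'`
    (hcomplete : ∀ u : ℕ → C',
      (∀ M : ℝ, ∃ N : ℕ, ∀ m n : ℕ, N ≤ m → N ≤ n → (M : WithTop ℝ) ≤ ν' (u m - u n)) →
      ∃ L : C', ∀ M : ℝ, ∃ N : ℕ, ∀ n : ℕ, N ≤ n → (M : WithTop ℝ) ≤ ν' (u n - L))
    (d1 : C' →ₗ[Novikov] C) (d2 : C →ₗ[Novikov] C'')
    (hdd : ∀ y : C', d2 (d1 y) = 0)
    (hmono : ∀ y : C', ν' y ≤ ν (d1 y))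
    (x : C) (hx : d2 x = 0) :
    (∀ xs : ℕ → C, (∀ n, d2 (xs n) = 0) → (∀ n, ∃ y : C', d1 y = x - xs n) →
        (∀ M : ℝ, ∃ N : ℕ, ∀ n : ℕ, N ≤ n → (M : WithTop ℝ) ≤ ν (xs n)) →
        ∃ y : C', d1 y = x) ∧
      ((¬ ∃ y : C', d1 y = x) →
        ∃ Δ : ℝ, ∀ x' : C, d2 x' = 0 → (∃ y : C', d1 y = x - x') →
          ν x' ≤ (Δ : WithTop ℝ)) := by
  have hpart1 : ∀ xs : ℕ → C, (∀ n, d2 (xs n) = 0) → (∀ n, ∃ y : C', d1 y = x - xs n) →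
      (∀ M : ℝ, ∃ N : ℕ, ∀ n : ℕ, N ≤ n → (M : WithTop ℝ) ≤ ν (xs n)) →
      ∃ y : C', d1 y = x := by
    intro xs _ hbd htend
    obtain ⟨K, hK⟩ := preimage_bound ν' hν'0 hν's hν'a ν hν0 hνs hνa d1
    have hzmem : ∀ n : ℕ, ∃ y : C', d1 y = xs n - xs (n+1) := by
      intro n
      obtain ⟨y1, hy1⟩ := hbd n
      obtain ⟨y2, hy2⟩ := hbd (n+1)
      exact ⟨y2 - y1, by rw [map_sub, hy1, hy2]; abel⟩
    choose wseq hw1 hw2 using fun n => hK _ (hzmem n)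
    obtain ⟨y0, hy0⟩ := hbd 0
    set u : ℕ → C' := fun n => y0 + ∑ k ∈ Finset.range n, wseq k with hu
    have hdu : ∀ n, d1 (u n) = x - xs n := by
      intro n
      show d1 (y0 + ∑ k ∈ Finset.range n, wseq k) = x - xs n
      rw [map_add, map_sum, hy0,
        Finset.sum_congr rfl (fun k (_ : k ∈ Finset.range n) => hw1 k),
        Finset.sum_range_sub' (fun k => xs k)]
      abel
    -- Cauchy estimate
    have hw2' : ∀ (M : ℝ) (N : ℕ), (∀ n : ℕ, N ≤ n → (M + K : WithTop ℝ) ≤ ν (xs n)) →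
        ∀ k : ℕ, N ≤ k → (M : WithTop ℝ) ≤ ν' (wseq k) := by
      intro M N hN k hk
      have h1 : ((M + K : ℝ) : WithTop ℝ) ≤ ν (xs k - xs (k+1)) := by
        refine le_trans ?_ (vsub_ge ν hνs hνa _ _)
        push_cast
        exact le_min (hN k hk) (hN (k+1) (hk.trans (Nat.le_succ k)))
      have h2 := h1.trans (hw2 k)
      have h3 : (K : WithTop ℝ) + (M : WithTop ℝ) ≤ (K : WithTop ℝ) + ν' (wseq k) := by
        calc (K : WithTop ℝ) + (M : WithTop ℝ) = ((M + K : ℝ) : WithTop ℝ) := by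
              rw [← WithTop.coe_add, add_comm K M]
          _ ≤ _ := h2
      exact (WithTop.add_le_add_iff_left WithTop.coe_ne_top).mp h3
    have hucauchy : ∀ M : ℝ, ∃ N : ℕ, ∀ m n : ℕ, N ≤ m → N ≤ n →
        (M : WithTop ℝ) ≤ ν' (u m - u n) := by
      intro M
      obtain ⟨N, hN⟩ := htend (M + K)
      have hN' : ∀ n : ℕ, N ≤ n → (M + K : WithTop ℝ) ≤ ν (xs n) := by
        intro n hn
        have := hN n hn
        push_cast at this ⊢
        exact this
      have haux : ∀ m n : ℕ, N ≤ n → n ≤ m → (M : WithTop ℝ) ≤ ν' (u m - u n) := by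
        intro m n hn hnm
        have hdiff : u m - u n = ∑ k ∈ Finset.Ico n m, wseq k := by
          rw [Finset.sum_Ico_eq_sub _ hnm]
          show (y0 + ∑ k ∈ Finset.range m, wseq k) - (y0 + ∑ k ∈ Finset.range n, wseq k) = _
          abel
        rw [hdiff]
        refine vsum_ge ν' hν'0 hν'a _ _ _ fun k hkmem => ?_
        exact hw2' M N hN' k (hn.trans (Finset.mem_Ico.mp hkmem).1)
      refine ⟨N, fun m n hm hn => ?_⟩
      rcases le_total n m with h | h
      · exact haux m n hn h
      · rw [vsub_comm ν' hν's]
        exact haux n m hm h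
    obtain ⟨L, hL⟩ := hcomplete u hucauchy
    refine ⟨L, ?_⟩
    have htop : ν (d1 L - x) = ⊤ := by
      refine top_of_forall_le fun M => ?_
      obtain ⟨N1, hN1⟩ := hL M
      obtain ⟨N2, hN2⟩ := htend M
      set n := max N1 N2 with hn
      have h1 : (M : WithTop ℝ) ≤ ν (d1 L - d1 (u n)) := by
        have h2 : (M : WithTop ℝ) ≤ ν' (L - u n) := by
          rw [vsub_comm ν' hν's]
          exact hN1 n (le_max_left _ _)
        refine h2.trans ((hmono _).trans ?_)
        rw [map_sub]
      have h2 : (M : WithTop ℝ) ≤ ν (d1 (u n) - x) := by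
        rw [hdu n, show x - xs n - x = -(xs n) by abel, vneg ν hνs]
        exact hN2 n (le_max_right _ _)
      calc (M : WithTop ℝ) ≤ min (ν (d1 L - d1 (u n))) (ν (d1 (u n) - x)) := le_min h1 h2
        _ ≤ ν ((d1 L - d1 (u n)) + (d1 (u n) - x)) := hνa _ _
        _ = ν (d1 L - x) := by rw [sub_add_sub_cancel]
    exact sub_eq_zero.mp ((hν0 _).mp htop)
  refine ⟨hpart1, ?_⟩
  intro hnb
  by_contra hΔ
  push_neg at hΔ
  choose xs h1 h2 h3 using fun n : ℕ => hΔ (n : ℝ)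
  refine hnb (hpart1 xs h1 h2 ?_)
  intro M
  obtain ⟨N, hN⟩ := exists_nat_ge M
  refine ⟨N, fun n hn => ?_⟩
  have : (M : WithTop ℝ) ≤ ((n : ℝ) : WithTop ℝ) := by
    exact_mod_cast hN.trans (Nat.cast_le.mpr hn)
  exact this.trans (h3 n).le
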